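/- Let B be a Bernoulli random variable, T0 a nonnegative random variable, C a random variable, and X a random vector, all on a common probability space. Define T = T0 on the event {B = 0} and T = ∞ on {B = 1}. If T0 is conditionally independent of C given X, and B is conditionally independent of the pair (T0, C) given X, then T is conditionally independent of C given X. -/

import Mathlib

open MeasureTheory ProbabilityTheory
open scoped ENNReal

/-- Kernel-level lemma: if `g ⟂ h` and `f ⟂ (g, h)`, then `(f, g) ⟂ h`. -/
lemma kernel_indepFun_prod_mk_left
    {α Ω' β γ δ : Type*} {mα : MeasurableSpace α} {mΩ' : MeasurableSpace Ω'}
    [mβ : MeasurableSpace β] [mγ : MeasurableSpace γ] [mδ : MeasurableSpace δ]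
    {κ : Kernel α Ω'} [IsZeroOrMarkovKernel κ] {μ : Measure α}
    {f : Ω' → β} {g : Ω' → γ} {h : Ω' → δ}
    (hf : Measurable f) (hg : Measurable g) (hh : Measurable h)
    (hgh : Kernel.IndepFun g h κ μ)
    (hfgh : Kernel.IndepFun f (fun ω => (g ω, h ω)) κ μ) :
    Kernel.IndepFun (fun ω => (f ω, g ω)) h κ μ := by
  have hfg : Kernel.IndepFun f g κ μ :=
    hfgh.comp measurable_id measurable_fst
  rw [Kernel.IndepFun]
  refine Kernel.IndepSets.indep (Measurable.comap_le (hf.prodMk hg)) hh.comap_le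
    ((isPiSystem_prod (α := β) (β := γ)).comap (fun ω => (f ω, g ω)))
    ((MeasurableSpace.isPiSystem_measurableSet (α := δ)).comap h) ?_ ?_ ?_
  · rw [← generateFrom_prod, MeasurableSpace.comap_generateFrom]
    congr 1
  · rw [MeasurableSpace.comap_eq_generateFrom]
    congr 1
  · rintro _ _ ⟨_, ⟨A, hA, S, hS, rfl⟩, rfl⟩ ⟨U, hU, rfl⟩
    have e1 := hfgh.measure_inter_preimage_eq_mul A (S ×ˢ U) hA (hS.prod hU)
    have e2 := hgh.measure_inter_preimage_eq_mul S U hS hU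
    have e3 := hfg.measure_inter_preimage_eq_mul A S hA hS
    filter_upwards [e1, e2, e3] with a h1 h2 h3
    simp only [Set.mk_preimage_prod] at h1 ⊢
    rw [Set.inter_assoc, h1, h2, h3, mul_assoc]

theorem cure_T_condIndep_C
    {Ω E : Type*} [mΩ : MeasurableSpace Ω] [StandardBorelSpace Ω] [Nonempty Ω]
    [MeasurableSpace E]
    (μ : Measure Ω) [IsProbabilityMeasure μ]
    (B : Ω → Bool) (T0 C : Ω → ℝ) (X : Ω → E)
    (hB : Measurable B) (hT0 : Measurable T0) (hC : Measurable C) (hX : Measurable X)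
    (hT0nn : ∀ ω, 0 ≤ T0 ω)
    (h1 : CondIndepFun (MeasurableSpace.comap X inferInstance) hX.comap_le T0 C μ)
    (h2 : CondIndepFun (MeasurableSpace.comap X inferInstance) hX.comap_le
      B (fun ω => (T0 ω, C ω)) μ) :
    CondIndepFun (MeasurableSpace.comap X inferInstance) hX.comap_le
      (fun ω => if B ω then (⊤ : ℝ≥0∞) else ENNReal.ofReal (T0 ω)) C μ := by
  have hg : Kernel.IndepFun T0 C
      (condExpKernel μ (MeasurableSpace.comap X inferInstance))
      (μ.trim hX.comap_le) := h1
  have hfgh : Kernel.IndepFun B (fun ω => (T0 ω, C ω))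
      (condExpKernel μ (MeasurableSpace.comap X inferInstance))
      (μ.trim hX.comap_le) := h2
  have key : Kernel.IndepFun (fun ω => (B ω, T0 ω)) C
      (condExpKernel μ (MeasurableSpace.comap X inferInstance))
      (μ.trim hX.comap_le) :=
    kernel_indepFun_prod_mk_left hB hT0 hC hg hfgh
  have hφ : Measurable (fun p : Bool × ℝ =>
      if p.1 then (⊤ : ℝ≥0∞) else ENNReal.ofReal p.2) := by
    apply Measurable.ite
    · exact measurable_fst (measurableSet_singleton true)
    · exact measurable_const
    · exact ENNReal.measurable_ofReal.comp measurable_snd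
  exact key.comp hφ measurable_id
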